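/- arXiv:0908.0560 — 3 statements merged into one kernel-verified Lean document; each statement's English description precedes it below -/
import Mathlib

section
/- For L ≥ 2, the union over j = 0,…,L−1 of the intervals [−2 + 2cos(2πj/L), 2 + 2cos(2πj/L)] equals [−4,4] if L is even, and equals [−2 + 2cos(π(L−1)/L), 4] if L is odd. -/
open Real

/-! Every centre `cos (2πj/L)` lies in `[-1, 1]`, so all the intervals overlap and their union is
the single interval from the smallest left end to the largest right end. The largest centre is
`cos 0 = 1`; by the symmetry `j ↦ L - j` and the monotonicity of `cos` on `[0, π]` the smallest is
at `j = ⌊L/2⌋`, where the angle is `π` for even `L` and `π(L-1)/L` for odd `L`. -/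

theorem biUnion_Icc_eq_Icc {ι α : Type*} [LinearOrder α] {s : Set ι} {a b : ι → α} {i₀ i₁ : ι}
    (hi₀ : i₀ ∈ s) (hi₁ : i₁ ∈ s) (ha : ∀ i ∈ s, a i₀ ≤ a i) (hb : ∀ i ∈ s, b i ≤ b i₁)
    (hab : a i₁ ≤ b i₀) :
    ⋃ i ∈ s, Set.Icc (a i) (b i) = Set.Icc (a i₀) (b i₁) := by
  apply subset_antisymm
  · exact Set.iUnion₂_subset fun i hi ↦ Set.Icc_subset_Icc (ha i hi) (hb i hi)
  · rintro x ⟨hx₀, hx₁⟩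
    rcases le_or_gt x (b i₀) with hx | hx
    · exact Set.mem_biUnion hi₀ ⟨hx₀, hx⟩
    · exact Set.mem_biUnion hi₁ ⟨hab.trans hx.le, hx₁⟩

lemma cos_two_pi_mul_div_half_le_of_two_mul_le {L j : ℕ} (hj : 2 * j ≤ L) :
    cos (2 * π * (L / 2 : ℕ) / L) ≤ cos (2 * π * j / L) := by
  have hhalf : 2 * (L / 2 : ℕ) ≤ (L : ℝ) := by exact_mod_cast Nat.mul_div_le L 2
  have hjhalf : (j : ℝ) ≤ (L / 2 : ℕ) := by exact_mod_cast (Nat.le_div_iff_mul_le two_pos).2 (by omega)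
  apply cos_le_cos_of_nonneg_of_le_pi (by positivity)
  · calc 2 * π * (L / 2 : ℕ) / L = π * (2 * (L / 2 : ℕ) / L) := by ring
      _ ≤ π * 1 := by gcongr; exact div_le_one_of_le₀ hhalf L.cast_nonneg
      _ = π := mul_one π
  · gcongr

lemma cos_two_pi_mul_div_half_le {L j : ℕ} (hj : j ≤ L) :
    cos (2 * π * (L / 2 : ℕ) / L) ≤ cos (2 * π * j / L) := by
  rcases le_total (2 * j) L with h | h
  · exact cos_two_pi_mul_div_half_le_of_two_mul_le h
  · rcases Nat.eq_zero_or_pos L with rfl | hL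
    · simp
    have hreflect : cos (2 * π * j / L) = cos (2 * π * (L - j : ℕ) / L) := by
      rw [Nat.cast_sub hj, ← cos_two_pi_sub]
      congr 1
      field_simp
    rw [hreflect]
    exact cos_two_pi_mul_div_half_le_of_two_mul_le (by omega)

lemma cos_two_pi_mul_div_half {L : ℕ} (hL : L ≠ 0) :
    cos (2 * π * (L / 2 : ℕ) / L) = if Even L then -1 else cos (π * ((L : ℝ) - 1) / L) := by
  split_ifs with hE
  · obtain ⟨k, rfl⟩ := hE
    have hk : (k : ℝ) ≠ 0 := by exact_mod_cast (by omega : k ≠ 0)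
    rw [← two_mul, Nat.mul_div_cancel_left k two_pos, ← cos_pi]
    congr 1
    push_cast
    field_simp
  · obtain ⟨k, rfl⟩ := Nat.not_even_iff_odd.mp hE
    rw [Nat.mul_add_div two_pos, Nat.div_eq_of_lt one_lt_two, add_zero]
    congr 1
    push_cast
    ring

/-- The union of the shifted intervals I_j = [−2+2cos(2πj/L), 2+2cos(2πj/L)] is
[−4,4] for even L and [−2+2cos(π(L−1)/L), 4] for odd L. -/
theorem union_intervals (L : ℕ) (hL : 2 ≤ L) :
    (⋃ j ∈ Finset.range L,
        Set.Icc (-2 + 2 * Real.cos (2 * Real.pi * j / L))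
                (2 + 2 * Real.cos (2 * Real.pi * j / L)))
      = if Even L then Set.Icc (-4 : ℝ) 4
        else Set.Icc (-2 + 2 * Real.cos (Real.pi * ((L : ℝ) - 1) / L)) 4 := by
  refine (biUnion_Icc_eq_Icc (s := ↑(Finset.range L))
      (a := fun j : ℕ ↦ -2 + 2 * cos (2 * π * j / L)) (b := fun j : ℕ ↦ 2 + 2 * cos (2 * π * j / L))
      (i₀ := L / 2) (i₁ := 0) (Finset.mem_range.2 (by omega)) (Finset.mem_range.2 (by omega))
      (fun j hj ↦ by linarith [cos_two_pi_mul_div_half_le (L := L) (Finset.mem_range.1 hj).le])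
      (fun j _ ↦ by simp [cos_le_one])
      (by simpa using by linarith [neg_one_le_cos (2 * π * (L / 2 : ℕ) / L)])).trans ?_
  rw [cos_two_pi_mul_div_half (by omega)]
  split_ifs <;> norm_num
end

section
/- Let u_1, u_2 be solutions of the Jacobi equation p_n u(n+1) + p_{n−1} u(n−1) = λ u(n) with p_n ∈ (0,1], satisfying u_1(−1)=0, u_1(0)=1 and u_2(−1)=1, u_2(0)=0. Then for all l ≥ 1, ‖u_1‖_l · ‖u_2‖_l ≥ c·l for some constant c > 0 depending only on inf_n p_n, where ‖u‖_l² = Σ_{n=0}^{[l]} |u(n)|² + (l−[l])|u([l]+1)|². -/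
/-!
The Wronskian `p n (u₁(n+1) u₂(n) − u₁(n) u₂(n+1))` of the two solutions is constant, equal to
`p (-1) ≥ ε`; since `p n ≤ 1`, each bracket is at least `ε`, hence so is
`|u₁(n+1)| |u₂(n)| + |u₁(n)| |u₂(n+1)|`. Summing over `n < ⌊l⌋` and applying Cauchy–Schwarz to
both halves gives `⌊l⌋ ε ≤ 2 ‖u₁‖_l ‖u₂‖_l`, and `l ≤ 2 ⌊l⌋` for `l ≥ 1`.
-/

/-- The truncated ℓ² norm squared: ‖u‖_l² = Σ_{n=0}^{⌊l⌋} |u(n)|² + (l−⌊l⌋)|u(⌊l⌋+1)|². -/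
noncomputable def truncNormSq (u : ℤ → ℝ) (l : ℝ) : ℝ :=
  (∑ n ∈ Finset.range (⌊l⌋₊ + 1), (u n) ^ 2) + (l - ⌊l⌋₊) * (u (⌊l⌋₊ + 1)) ^ 2

open Finset

noncomputable def jacobiWronskian (p u v : ℤ → ℝ) (n : ℤ) : ℝ :=
  p n * (u (n + 1) * v n - u n * v (n + 1))

section Wronskian

variable {p u v : ℤ → ℝ} {lam : ℝ}

theorem jacobiWronskian_eq_sub_one {n : ℤ}
    (hu : p n * u (n + 1) + p (n - 1) * u (n - 1) = lam * u n)
    (hv : p n * v (n + 1) + p (n - 1) * v (n - 1) = lam * v n) :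
    jacobiWronskian p u v n = jacobiWronskian p u v (n - 1) := by
  simp only [jacobiWronskian, sub_add_cancel]
  linear_combination v n * hu - u n * hv

theorem jacobiWronskian_natCast
    (hu : ∀ n : ℤ, 0 ≤ n → p n * u (n + 1) + p (n - 1) * u (n - 1) = lam * u n)
    (hv : ∀ n : ℤ, 0 ≤ n → p n * v (n + 1) + p (n - 1) * v (n - 1) = lam * v n) (k : ℕ) :
    jacobiWronskian p u v k = jacobiWronskian p u v (-1) := by
  induction k with
  | zero => simpa using jacobiWronskian_eq_sub_one (hu 0 le_rfl) (hv 0 le_rfl)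
  | succ k ih =>
    have hk : (0 : ℤ) ≤ (k + 1 : ℕ) := by positivity
    rw [jacobiWronskian_eq_sub_one (hu _ hk) (hv _ hk)]
    simpa using ih

theorem le_abs_mul_add_abs_mul_of_le_jacobiWronskian {ε : ℝ} {n : ℤ} (hε : 0 < ε)
    (hp₀ : 0 ≤ p n) (hp₁ : p n ≤ 1) (hW : ε ≤ jacobiWronskian p u v n) :
    ε ≤ |u (n + 1)| * |v n| + |u n| * |v (n + 1)| := by
  set D := u (n + 1) * v n - u n * v (n + 1)
  have hD : ε ≤ D := by
    have hpD : ε ≤ p n * D := hW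
    have hD₀ : 0 < D := pos_of_mul_pos_right (hε.trans_le hpD) hp₀
    nlinarith
  calc ε ≤ D := hD
    _ ≤ |u (n + 1) * v n| + |u n * v (n + 1)| :=
      sub_le_iff_le_add.mpr ((le_abs_self _).trans (by linarith [neg_le_abs (u n * v (n + 1))]))
    _ = _ := by rw [abs_mul, abs_mul]

end Wronskian

theorem sum_range_abs_succ_mul_abs_le (f g : ℕ → ℝ) (N : ℕ) :
    ∑ k ∈ range N, |f (k + 1)| * |g k| ≤
      √(∑ n ∈ range (N + 1), f n ^ 2) * √(∑ n ∈ range (N + 1), g n ^ 2) := by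
  have hshift : ∑ k ∈ range N, f (k + 1) ^ 2 ≤ ∑ n ∈ range (N + 1), f n ^ 2 := by
    rw [sum_range_succ' (fun n => f n ^ 2)]
    linarith [sq_nonneg (f 0)]
  have hsub : ∑ k ∈ range N, g k ^ 2 ≤ ∑ n ∈ range (N + 1), g n ^ 2 := by
    rw [sum_range_succ]
    linarith [sq_nonneg (g N)]
  calc ∑ k ∈ range N, |f (k + 1)| * |g k|
      ≤ √(∑ k ∈ range N, |f (k + 1)| ^ 2) * √(∑ k ∈ range N, |g k| ^ 2) :=
        Real.sum_mul_le_sqrt_mul_sqrt _ _ _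
    _ ≤ _ := by
      simp only [sq_abs]
      gcongr

theorem sum_range_cross_abs_le (f g : ℕ → ℝ) (N : ℕ) :
    ∑ k ∈ range N, (|f (k + 1)| * |g k| + |f k| * |g (k + 1)|) ≤
      2 * (√(∑ n ∈ range (N + 1), f n ^ 2) * √(∑ n ∈ range (N + 1), g n ^ 2)) := by
  have h₁ := sum_range_abs_succ_mul_abs_le f g N
  have h₂ := sum_range_abs_succ_mul_abs_le g f N
  simp only [mul_comm |g _|] at h₂
  rw [sum_add_distrib]
  linarith

theorem sum_range_sq_le_truncNormSq (u : ℤ → ℝ) {l : ℝ} (hl : 0 ≤ l) :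
    ∑ n ∈ range (⌊l⌋₊ + 1), u n ^ 2 ≤ truncNormSq u l := by
  have : 0 ≤ (l - ⌊l⌋₊) * u (⌊l⌋₊ + 1) ^ 2 :=
    mul_nonneg (sub_nonneg.mpr (Nat.floor_le hl)) (sq_nonneg _)
  unfold truncNormSq
  linarith

/-- For the Dirichlet and Neumann solutions of a Jacobi equation with weights
p_n ∈ (0,1] bounded below by ε > 0, the product of truncated norms grows at least
linearly: ‖u₁‖_l ‖u₂‖_l ≥ c l with c depending only on the lower bound ε. -/
theorem norm_product_lower_bound (ε : ℝ) (hε : 0 < ε) :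
    ∃ c : ℝ, 0 < c ∧
      ∀ (p : ℤ → ℝ) (lam : ℝ) (u1 u2 : ℤ → ℝ),
        (∀ n : ℤ, -1 ≤ n → ε ≤ p n ∧ p n ≤ 1) →
        (∀ n : ℤ, 0 ≤ n → p n * u1 (n + 1) + p (n - 1) * u1 (n - 1) = lam * u1 n) →
        (∀ n : ℤ, 0 ≤ n → p n * u2 (n + 1) + p (n - 1) * u2 (n - 1) = lam * u2 n) →
        u1 (-1) = 0 → u1 0 = 1 → u2 (-1) = 1 → u2 0 = 0 →
        ∀ l : ℝ, 1 ≤ l →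
          c * l ≤ Real.sqrt (truncNormSq u1 l) * Real.sqrt (truncNormSq u2 l) := by
  refine ⟨ε / 4, by positivity, fun p lam u1 u2 hp h1 h2 hu1m hu10 hu2m hu20 l hl => ?_⟩
  set N := ⌊l⌋₊
  have hW : jacobiWronskian p u1 u2 (-1) = p (-1) := by
    simp [jacobiWronskian, hu1m, hu10, hu2m, hu20]
  have hpoint : ∀ k : ℕ, ε ≤ |u1 (k + 1)| * |u2 k| + |u1 k| * |u2 (k + 1)| := fun k => by
    have hpk := hp k (by omega)
    refine le_abs_mul_add_abs_mul_of_le_jacobiWronskian hε (hε.le.trans hpk.1) hpk.2 ?_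
    rw [jacobiWronskian_natCast h1 h2, hW]
    exact (hp (-1) le_rfl).1
  have hsum : N * ε ≤ 2 * (√(truncNormSq u1 l) * √(truncNormSq u2 l)) := by
    calc N * ε ≤ ∑ k ∈ range N, (|u1 (k + 1)| * |u2 k| + |u1 k| * |u2 (k + 1)|) := by
          simpa using card_nsmul_le_sum (range N) _ ε fun k _ => hpoint k
      _ ≤ 2 * (√(∑ n ∈ range (N + 1), u1 n ^ 2) * √(∑ n ∈ range (N + 1), u2 n ^ 2)) := by
          simpa using sum_range_cross_abs_le (fun n => u1 n) (fun n => u2 n) N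
      _ ≤ _ := by
          gcongr <;> exact sum_range_sq_le_truncNormSq _ (by linarith)
  have hN : l ≤ 2 * N := by
    have h1N : (1 : ℝ) ≤ N := by exact_mod_cast Nat.le_floor (by exact_mod_cast hl)
    linarith [Nat.lt_floor_add_one l]
  calc ε / 4 * l ≤ ε / 4 * (2 * N) := by gcongr
    _ = N * ε / 2 := by ring
    _ ≤ _ := by linarith
end

section
/- Let μ be a finite Borel measure on ℝ and α ∈ [0,1]. Let T_∞ = {x : D_μ^α(x) = ∞} with characteristic function χ_α, and set dμ_{αs} = χ_α dμ, dμ_{αc} = (1−χ_α) dμ. Then μ_{αs} is supported on a set of zero α-dimensional Hausdorff measure, and μ_{αc}(S) = 0 for every Borel set S with h^α(S) = 0. -/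
open MeasureTheory Filter

/-- The upper α-derivative D_μ^α(x) = limsup_{ε↓0} μ((x−ε,x+ε))/(2ε)^α. -/
noncomputable def upperDeriv (μ : Measure ℝ) (α : ℝ) (x : ℝ) : ENNReal :=
  limsup (fun ε : ℝ => μ (Set.Ioo (x - ε) (x + ε)) / ENNReal.ofReal ((2 * ε) ^ α))
    (nhdsWithin 0 (Set.Ioi 0))

/-!
On `T = {D_μ^α = ∞}` every point is the centre of arbitrarily small balls with
`μ (ball x r) ≥ c r^α`; a Vitali subfamily of them, enlarged four times, covers `T` by sets
whose `α`-th powers of diameters sum to at most `8^α μ(ℝ) / c`, so `μH[α] T = 0` as `c → ∞`.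
Off `T` the points fall into countably many sets `A` on which `μ (ball x ε) ≤ C ε^α` for all
`ε < δ`. A set of diameter `d < δ` meeting `A` at `x` lies in `ball x ε` for every `ε > d`, so
`μ (s ∩ A) ≤ C (diam s)^α` for small sets `s`, which dominates `μ` on `A` by `C • μH[α]`.
-/

open Set Metric Topology
open scoped ENNReal

section MetricSpace

variable {X : Type*} [MetricSpace X] [MeasurableSpace X] (μ : Measure X) (α : ℝ)

def ballMeasureLeSet (C : ℝ≥0∞) (δ : ℝ) : Set X :=
  {x | ∀ ε ∈ Ioo 0 δ, μ (ball x ε) ≤ C * ENNReal.ofReal (ε ^ α)}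

variable {μ α}

theorem measure_le_mul_ediam_rpow_of_mem_ballMeasureLeSet (hα : 0 ≤ α) {C : ℝ≥0∞} (hC : C ≠ ⊤)
    {δ : ℝ} {x : X} (hx : x ∈ ballMeasureLeSet μ α C δ) {s : Set X} (hxs : x ∈ s)
    (hs : ediam s < ENNReal.ofReal δ) : μ s ≤ C * ediam s ^ α := by
  set d := (ediam s).toReal
  have hd : ENNReal.ofReal d = ediam s := ENNReal.ofReal_toReal (ne_top_of_lt hs)
  have hdδ : d < δ := by
    rw [← hd] at hs
    exact (ENNReal.ofReal_lt_ofReal_iff'.1 hs).1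
  have hbound : ∀ ε ∈ Ioo d δ, μ s ≤ C * ENNReal.ofReal (ε ^ α) := fun ε hε => by
    have hsub : s ⊆ ball x ε := fun y hy => by
      rw [mem_ball, ← edist_lt_ofReal]
      exact (edist_le_ediam_of_mem hy hxs).trans_lt
        (hd ▸ (ENNReal.ofReal_lt_ofReal_iff'.2 ⟨hε.1, ENNReal.toReal_nonneg.trans_lt hε.1⟩))
    exact (measure_mono hsub).trans (hx ε ⟨ENNReal.toReal_nonneg.trans_lt hε.1, hε.2⟩)
  have hlim : Tendsto (fun ε : ℝ => C * ENNReal.ofReal (ε ^ α)) (𝓝[>] d)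
      (𝓝 (C * ENNReal.ofReal (d ^ α))) :=
    (ENNReal.Tendsto.const_mul ((ENNReal.continuous_ofReal.tendsto _).comp
      (Real.continuousAt_rpow_const d α (Or.inr hα)).tendsto) (Or.inr hC)).mono_left
      nhdsWithin_le_nhds
  have := ge_of_tendsto hlim (eventually_of_mem (Ioo_mem_nhdsGT hdδ) hbound)
  rwa [← ENNReal.ofReal_rpow_of_nonneg ENNReal.toReal_nonneg hα, hd] at this

theorem measure_inter_ballMeasureLeSet_le_mul_hausdorffMeasure [BorelSpace X] (hα : 0 ≤ α)
    {C : ℝ≥0∞} (hC : C ≠ ⊤) (hC0 : C ≠ 0) {δ : ℝ} (hδ : 0 < δ) (S : Set X) :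
    μ (S ∩ ballMeasureLeSet μ α C δ) ≤ C * μH[α] S := by
  set A := ballMeasureLeSet μ α C δ
  have key : OuterMeasure.restrict A μ.toOuterMeasure ≤
      OuterMeasure.mkMetric (C • fun r : ℝ≥0∞ => r ^ α) := by
    refine OuterMeasure.le_mkMetric _ _ (ENNReal.ofReal (δ / 2)) (by simpa using hδ)
      fun s hs => ?_
    rw [OuterMeasure.restrict_apply]
    rcases (s ∩ A).eq_empty_or_nonempty with h | ⟨x, hxs, hxA⟩
    · simp [h]
    · refine (measure_mono inter_subset_left).trans
        (measure_le_mul_ediam_rpow_of_mem_ballMeasureLeSet hα hC hxA hxs (hs.trans_lt ?_))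
      exact (ENNReal.ofReal_lt_ofReal_iff hδ).2 (half_lt_self hδ)
  rw [OuterMeasure.mkMetric_smul _ hC hC0] at key
  simpa [OuterMeasure.restrict_apply, OuterMeasure.coe_mkMetric, Measure.hausdorffMeasure]
    using key S

theorem exists_countable_closedBall_cover_tsum_ediam_rpow_le [BorelSpace X]
    [SecondCountableTopology X] (hα : 0 ≤ α) {c : ℝ≥0∞} {T : Set X}
    (hT : ∀ x ∈ T, ∃ᶠ r in 𝓝[>] 0, c * ENNReal.ofReal (r ^ α) ≤ μ (ball x r))
    {δ : ℝ} (hδ : 0 < δ) :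
    ∃ (u : Set X) (r : X → ℝ), u.Countable ∧ T ⊆ ⋃ b ∈ u, closedBall b (4 * r b) ∧
      (∀ b ∈ u, ediam (closedBall b (4 * r b)) ≤ ENNReal.ofReal δ) ∧
      c * ∑' b : u, ediam (closedBall (b : X) (4 * r b)) ^ α ≤
        ENNReal.ofReal (8 ^ α) * μ univ := by
  have hrad : ∀ x ∈ T, ∃ ρ ∈ Ioo 0 (δ / 8), c * ENNReal.ofReal (ρ ^ α) ≤ μ (ball x ρ) :=
    fun x hx => ((hT x hx).and_eventually (Ioo_mem_nhdsGT (by positivity))).exists.imp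
      fun ρ h => ⟨h.2, h.1⟩
  choose! r hr hrμ using hrad
  obtain ⟨u, huT, hdisj, hcov⟩ := Vitali.exists_disjoint_subfamily_covering_enlargement_closedBall
    T id r (δ / 8) (fun x hx => (hr x hx).2.le) 4 (by norm_num)
  simp only [id] at hdisj hcov
  have hu : u.Countable := hdisj.countable_of_nonempty_interior fun b hb =>
    (nonempty_ball.2 (hr b (huT hb)).1).mono ball_subset_interior_closedBall
  have hdiam : ∀ b ∈ u, ediam (closedBall b (4 * r b)) ≤ ENNReal.ofReal (8 * r b) := by
    intro b hb
    have h4r : 0 ≤ 4 * r b := by linarith [(hr b (huT hb)).1]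
    rw [← closedEBall_ofReal h4r]
    refine ediam_closedEBall_le.trans_eq ?_
    rw [← ENNReal.ofReal_ofNat 2, ← ENNReal.ofReal_mul zero_le_two]
    ring_nf
  refine ⟨u, r, hu, fun x hx => ?_, fun b hb => (hdiam b hb).trans ?_, ?_⟩
  · obtain ⟨b, hb, hsub⟩ := hcov x hx
    exact mem_biUnion hb (hsub (mem_closedBall_self (hr x hx).1.le))
  · exact ENNReal.ofReal_le_ofReal (by linarith [(hr b (huT hb)).2])
  have hterm : ∀ b : u, c * ediam (closedBall (b : X) (4 * r b)) ^ α ≤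
      ENNReal.ofReal (8 ^ α) * μ (closedBall (b : X) (r b)) := fun ⟨b, hb⟩ => by
    have hrb := (hr b (huT hb)).1.le
    calc c * ediam (closedBall b (4 * r b)) ^ α
        ≤ c * ENNReal.ofReal ((8 * r b) ^ α) := by
          rw [← ENNReal.ofReal_rpow_of_nonneg (by positivity) hα]
          gcongr
          exact hdiam b hb
      _ = ENNReal.ofReal (8 ^ α) * (c * ENNReal.ofReal (r b ^ α)) := by
          rw [Real.mul_rpow (by norm_num) hrb, ENNReal.ofReal_mul (by positivity)]
          ring
      _ ≤ ENNReal.ofReal (8 ^ α) * μ (closedBall b (r b)) := by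
          gcongr
          exact (hrμ b (huT hb)).trans (measure_mono ball_subset_closedBall)
  calc c * ∑' b : u, ediam (closedBall (b : X) (4 * r b)) ^ α
      ≤ ∑' b : u, ENNReal.ofReal (8 ^ α) * μ (closedBall (b : X) (r b)) := by
        rw [← ENNReal.tsum_mul_left]
        exact ENNReal.tsum_le_tsum hterm
    _ = ENNReal.ofReal (8 ^ α) * μ (⋃ b ∈ u, closedBall b (r b)) := by
        rw [ENNReal.tsum_mul_left,
          measure_biUnion hu hdisj fun _ _ => measurableSet_closedBall]
    _ ≤ ENNReal.ofReal (8 ^ α) * μ univ := by gcongr; exact subset_univ _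

theorem mul_hausdorffMeasure_le_of_frequently_le_measure_ball [BorelSpace X]
    [SecondCountableTopology X] (hα : 0 ≤ α) {c : ℝ≥0∞} (hc : c ≠ ⊤) {T : Set X}
    (hT : ∀ x ∈ T, ∃ᶠ r in 𝓝[>] 0, c * ENNReal.ofReal (r ^ α) ≤ μ (ball x r)) :
    c * μH[α] T ≤ ENNReal.ofReal (8 ^ α) * μ univ := by
  choose u r hu hcover hdiam hsum using fun n : ℕ =>
    exists_countable_closedBall_cover_tsum_ediam_rpow_le hα hT (Nat.one_div_pos_of_nat (n := n))
  have := fun n => (hu n).to_subtype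
  set σ : ℕ → ℝ≥0∞ := fun n => ∑' b : u n, ediam (closedBall (b : X) (4 * r n b)) ^ α
  have hle : μH[α] T ≤ liminf σ atTop :=
    Measure.hausdorffMeasure_le_liminf_tsum α T (fun n : ℕ => ENNReal.ofReal (1 / (n + 1)))
      (by simpa using ENNReal.tendsto_ofReal tendsto_one_div_add_atTop_nhds_zero_nat)
      (fun n (b : u n) => closedBall (b : X) (4 * r n b))
      (Eventually.of_forall fun n b => hdiam n b b.2)
      (Eventually.of_forall fun n => by simpa only [biUnion_eq_iUnion] using hcover n)
  calc c * μH[α] T ≤ c * liminf σ atTop := by gcongr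
    _ = liminf (fun n => c * σ n) atTop := (ENNReal.liminf_const_mul_of_ne_top hc).symm
    _ ≤ ENNReal.ofReal (8 ^ α) * μ univ :=
        (liminf_le_liminf (Eventually.of_forall hsum)).trans_eq (liminf_const _)

theorem hausdorffMeasure_eq_zero_of_forall_frequently_le_measure_ball [BorelSpace X]
    [SecondCountableTopology X] [IsFiniteMeasure μ] (hα : 0 ≤ α) {T : Set X}
    (hT : ∀ x ∈ T, ∀ c ≠ ⊤, ∃ᶠ r in 𝓝[>] 0, c * ENNReal.ofReal (r ^ α) ≤ μ (ball x r)) :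
    μH[α] T = 0 := by
  by_contra hT0
  obtain ⟨n, hn⟩ := ENNReal.exists_nat_mul_gt hT0
    (ENNReal.mul_ne_top ENNReal.ofReal_ne_top (measure_ne_top μ univ))
  exact (mul_hausdorffMeasure_le_of_frequently_le_measure_ball hα (ENNReal.natCast_ne_top n)
    fun x hx => hT x hx n (ENNReal.natCast_ne_top n)).not_gt hn

end MetricSpace

theorem ENNReal.ofReal_rpow_ne_zero {r : ℝ} (hr : 0 < r) (α : ℝ) :
    ENNReal.ofReal (r ^ α) ≠ 0 :=
  (ENNReal.ofReal_pos.2 (Real.rpow_pos_of_pos hr α)).ne'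

theorem ENNReal.ofReal_two_mul_rpow {ε : ℝ} (hε : 0 ≤ ε) (α : ℝ) :
    ENNReal.ofReal ((2 * ε) ^ α) = ENNReal.ofReal (2 ^ α) * ENNReal.ofReal (ε ^ α) := by
  rw [Real.mul_rpow zero_le_two hε, ENNReal.ofReal_mul (by positivity)]

theorem frequently_le_measure_ball_of_upperDeriv_eq_top {μ : Measure ℝ} {α x : ℝ}
    (hx : upperDeriv μ α x = ⊤) {c : ℝ≥0∞} (hc : c ≠ ⊤) :
    ∃ᶠ r in 𝓝[>] 0, c * ENNReal.ofReal (r ^ α) ≤ μ (ball x r) := by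
  have h2 := ENNReal.ofReal_rpow_ne_zero two_pos α
  have hlt : c / ENNReal.ofReal (2 ^ α) < upperDeriv μ α x :=
    hx ▸ ENNReal.div_lt_top hc h2
  refine ((frequently_lt_of_lt_limsup (h := hlt)).and_eventually
    self_mem_nhdsWithin).mono fun r ⟨hr, hr0⟩ => ?_
  rw [ENNReal.lt_div_iff_mul_lt (Or.inl (ENNReal.ofReal_rpow_ne_zero (mul_pos two_pos hr0) α))
    (Or.inl ENNReal.ofReal_ne_top),
    ENNReal.ofReal_two_mul_rpow hr0.le, ← mul_assoc,
    ENNReal.div_mul_cancel h2 ENNReal.ofReal_ne_top] at hr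
  rw [Real.ball_eq_Ioo]
  exact hr.le

theorem compl_setOf_upperDeriv_eq_top_subset (μ : Measure ℝ) (α : ℝ) :
    {x | upperDeriv μ α x = ⊤}ᶜ ⊆
      ⋃ (n : ℕ) (m : ℕ), ballMeasureLeSet μ α ((n + 1) * ENNReal.ofReal (2 ^ α)) (1 / (m + 1)) := by
  intro x hx
  obtain ⟨n, hn⟩ := ENNReal.exists_nat_gt hx
  have hev := eventually_lt_of_limsup_lt (hn.trans (ENNReal.lt_add_right (by simp) one_ne_zero))
  obtain ⟨δ, hδ, hsub⟩ := mem_nhdsGT_iff_exists_Ioo_subset.1 hev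
  obtain ⟨m, hm⟩ := exists_nat_one_div_lt (mem_Ioi.1 hδ)
  refine mem_iUnion₂.2 ⟨n, m, fun ε hε => ?_⟩
  have hlt : μ (Ioo (x - ε) (x + ε)) / ENNReal.ofReal ((2 * ε) ^ α) < n + 1 :=
    hsub ⟨hε.1, hε.2.trans hm⟩
  rw [ENNReal.div_lt_iff (Or.inl (ENNReal.ofReal_rpow_ne_zero
    (mul_pos two_pos hε.1) α)) (Or.inl ENNReal.ofReal_ne_top),
    ENNReal.ofReal_two_mul_rpow hε.1.le, ← mul_assoc] at hlt
  rw [Real.ball_eq_Ioo]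
  exact hlt.le

theorem rodgers_taylor_general (μ : Measure ℝ) [IsFiniteMeasure μ]
    (α : ℝ) (hα0 : 0 ≤ α) :
    (∃ S : Set ℝ, μH[α] S = 0 ∧ μ.restrict {x | upperDeriv μ α x = ⊤} Sᶜ = 0) ∧
    (∀ S : Set ℝ, MeasurableSet S → μH[α] S = 0 →
      μ.restrict {x | upperDeriv μ α x = ⊤}ᶜ S = 0) := by
  constructor
  · obtain ⟨S, hTS, hSm, hS0⟩ := exists_measurable_superset_of_null
      (hausdorffMeasure_eq_zero_of_forall_frequently_le_measure_ball (μ := μ) hα0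
        fun x hx _ hc => frequently_le_measure_ball_of_upperDeriv_eq_top hx hc)
    refine ⟨S, hS0, ?_⟩
    rw [Measure.restrict_apply hSm.compl]
    exact measure_mono_null (fun x hx => hx.1 (hTS hx.2)) measure_empty
  · intro S hSm hS0
    rw [Measure.restrict_apply hSm]
    refine measure_mono_null (inter_subset_inter_right S
      (compl_setOf_upperDeriv_eq_top_subset μ α)) ?_
    simp only [inter_iUnion]
    refine measure_iUnion_null fun n => measure_iUnion_null fun m => ?_
    have hC0 : ((n : ℝ≥0∞) + 1) * ENNReal.ofReal (2 ^ α) ≠ 0 :=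
      mul_ne_zero (by simp) (ENNReal.ofReal_rpow_ne_zero two_pos α)
    refine le_zero_iff.1 ((measure_inter_ballMeasureLeSet_le_mul_hausdorffMeasure hα0
      (by finiteness) hC0 Nat.one_div_pos_of_nat S).trans_eq ?_)
    rw [hS0, mul_zero]

/-- Rodgers–Taylor decomposition: with T_∞ = {x : D_μ^α(x) = ∞}, the restriction
μ_{αs} = μ⌞T_∞ is α-singular (supported on a set of zero h^α measure) and
μ_{αc} = μ⌞T_∞ᶜ is α-continuous (vanishes on every Borel set of zero h^α measure). -/
theorem rodgers_taylor (μ : Measure ℝ) [IsFiniteMeasure μ]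
    (α : ℝ) (hα0 : 0 ≤ α) (hα1 : α ≤ 1) :
    (∃ S : Set ℝ, μH[α] S = 0 ∧ μ.restrict {x | upperDeriv μ α x = ⊤} Sᶜ = 0) ∧
    (∀ S : Set ℝ, MeasurableSet S → μH[α] S = 0 →
      μ.restrict {x | upperDeriv μ α x = ⊤}ᶜ S = 0) :=
  rodgers_taylor_general μ α hα0
end
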